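/- arXiv:2306.00732 — 3 statements merged into one kernel-verified Lean document; each statement's English description precedes it below -/
import Mathlib

section
/- Let A = K + S ∈ ℝ^{n×d}, where K ∈ ℝ^{n×d} has rank at most k and every row of S ∈ ℝ^{n×d} has at most s nonzero entries. Then for every 1 ≤ p < ∞, 𝔖^p(A) ≤ d^s·(k+s)^p. -/
open MeasureTheory Matrix Finset

/-- The `i`-th ℓ_p sensitivity of a matrix `A`:
`σ_i^p(A) = sup { |(Ax)_i|^p / ‖Ax‖_p^p : Ax ≠ 0 }` (zero if the set is empty). -/
noncomputable def lpSens (p : ℝ) {R C : Type*} [Fintype R] [Fintype C]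
    (A : Matrix R C ℝ) (i : R) : ℝ :=
  sSup {r : ℝ | ∃ x : C → ℝ, A.mulVec x ≠ 0 ∧
    r = |A.mulVec x i| ^ p / ∑ j, |A.mulVec x j| ^ p}

/-- The total ℓ_p sensitivity `𝔖^p(A) = Σ_i σ_i^p(A)`. -/
noncomputable def totalSens (p : ℝ) {R C : Type*} [Fintype R] [Fintype C]
    (A : Matrix R C ℝ) : ℝ := ∑ i, lpSens p A i

/-!
Auerbach's lemma (a basis of unit vectors maximising `|det|` has coordinate functionals of norm
at most one) bounds the total `ℓ_p` sensitivity of an `r`-dimensional subspace of `ℓ_p^m` by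
`r ^ p`: with `c i = ∑ j, |u j i|` one has `|y i| ≤ c i * ‖y‖_p`, and
`‖c‖_p ≤ ∑ j, ‖u j‖_p = r` by the triangle inequality.

Group the rows of `A = K + S` according to a set `T` of `min s d` columns containing their
support. On the rows of one group, `A` agrees with `K + S * D_T`, where `D_T` is the diagonal
projection onto the columns in `T`, and this matrix has rank at most `k + s`. There are at most
`d.choose (min s d) ≤ d ^ s` groups.
-/

open Module
open scoped ENNReal

section Auerbach

variable {E : Type*} [NormedAddCommGroup E] [NormedSpace ℝ E] [FiniteDimensional ℝ E]
  {ι : Type*} [Fintype ι] [DecidableEq ι]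

lemma Module.Basis.continuous_det (b : Basis ι ℝ E) : Continuous b.det := by
  suffices Continuous fun u => b.det u from this
  simp_rw [b.det_apply]
  refine (continuous_matrix fun i j => ?_).matrix_det
  exact (LinearMap.continuous_of_finiteDimensional (b.coord i)).comp (continuous_apply j)

lemma Module.Basis.exists_forall_abs_det_le (b : Basis ι ℝ E) :
    ∃ u : ι → E, (∀ j, ‖u j‖ = 1) ∧ b.det u ≠ 0 ∧
      ∀ v : ι → E, (∀ j, ‖v j‖ = 1) → |b.det v| ≤ |b.det u| := by
  have hcompact : IsCompact (Set.univ.pi fun _ : ι => Metric.sphere (0 : E) 1) :=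
    isCompact_univ_pi fun _ => isCompact_sphere 0 1
  set u₀ : ι → E := fun j => ‖b j‖⁻¹ • b j
  have hu₀ : u₀ ∈ Set.univ.pi fun _ : ι => Metric.sphere (0 : E) 1 := fun j _ => by
    simpa [u₀] using norm_smul_inv_norm (𝕜 := ℝ) (b.ne_zero j)
  have hdet₀ : b.det u₀ ≠ 0 := by
    simp [u₀, AlternatingMap.map_smul_univ, Finset.prod_ne_zero_iff, b.ne_zero, b.det_ne_zero]
  obtain ⟨u, hu, hmax⟩ :=
    hcompact.exists_isMaxOn ⟨u₀, hu₀⟩ (continuous_abs.comp b.continuous_det).continuousOn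
  refine ⟨u, fun j => by simpa using hu j trivial, fun h => ?_,
    fun v hv => hmax fun j _ => by simpa using hv j⟩
  have := hmax hu₀
  simp [h, hdet₀] at this

theorem exists_basis_norm_eq_one_abs_repr_le :
    ∃ u : Basis (Fin (finrank ℝ E)) ℝ E,
      (∀ j, ‖u j‖ = 1) ∧ ∀ y j, |u.repr y j| ≤ ‖y‖ := by
  set b := finBasis ℝ E
  obtain ⟨u, hu, hdet, hmax⟩ := b.exists_forall_abs_det_le
  obtain ⟨hli, hsp⟩ := b.is_basis_iff_det.mpr (isUnit_iff_ne_zero.mpr hdet)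
  set c := Basis.mk hli hsp.ge
  refine ⟨c, fun j => by simpa [c] using hu j, fun y j => ?_⟩
  have hcoord (y : E) : b.det u * c.coord j y = b.det (Function.update u j y) :=
    congr($(b.det_smul_mk_coord_eq_det_update hli hsp.ge j) y)
  have hnorm : ‖LinearMap.toContinuousLinearMap (c.coord j)‖ ≤ 1 := by
    refine ContinuousLinearMap.opNorm_le_of_unit_norm zero_le_one fun y hy => ?_
    have := hmax (Function.update u j y) fun i => by
      rcases eq_or_ne i j with rfl | hij <;> simp [*]
    rw [← hcoord, abs_mul] at this
    simpa using le_of_mul_le_mul_left (by simpa using this) (abs_pos.mpr hdet)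
  simpa using
    (ContinuousLinearMap.le_opNorm _ y).trans (mul_le_of_le_one_left (norm_nonneg y) hnorm)

end Auerbach

section LpSubspace

variable {m : Type*} [Fintype m]

lemma PiLp.norm_toLp_abs (p : ℝ≥0∞) (x : PiLp p fun _ : m => ℝ) :
    ‖WithLp.toLp p fun i => |x i|‖ = ‖x‖ := by
  rcases p.trichotomy with rfl | rfl | hp
  · simp [PiLp.norm_eq_card]
  · simp [PiLp.norm_eq_ciSup]
  · simp [PiLp.norm_eq_sum hp]

lemma PiLp.norm_toLp_rpow {p : ℝ} (hp : 0 < p) (x : m → ℝ) :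
    ‖WithLp.toLp (ENNReal.ofReal p) x‖ ^ p = ∑ i, |x i| ^ p := by
  have hp' : 0 < (ENNReal.ofReal p).toReal := by simpa [ENNReal.toReal_ofReal hp.le]
  rw [PiLp.norm_eq_sum hp', ENNReal.toReal_ofReal hp.le, ← Real.rpow_mul (by positivity),
    one_div_mul_cancel hp.ne', Real.rpow_one]
  simp

theorem PiLp.exists_abs_apply_le_mul_norm {p : ℝ≥0∞} [Fact (1 ≤ p)]
    (V : Submodule ℝ (PiLp p fun _ : m => ℝ)) :
    ∃ c : m → ℝ, (∀ i, 0 ≤ c i) ∧ ‖WithLp.toLp p c‖ ≤ finrank ℝ V ∧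
      ∀ y ∈ V, ∀ i, |y i| ≤ c i * ‖y‖ := by
  obtain ⟨u, hu, hrepr⟩ := exists_basis_norm_eq_one_abs_repr_le (E := V)
  set v : Fin (finrank ℝ V) → PiLp p fun _ : m => ℝ := fun j => u j
  refine ⟨fun i => ∑ j, |v j i|, fun i => by positivity, ?_, fun y hy i => ?_⟩
  · calc ‖WithLp.toLp p fun i => ∑ j, |v j i|‖
        = ‖∑ j, WithLp.toLp p fun i => |v j i|‖ := by
          congr 1; ext i; simp
      _ ≤ ∑ j, ‖WithLp.toLp p fun i => |v j i|‖ := norm_sum_le _ _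
      _ = finrank ℝ V := by simp [v, PiLp.norm_toLp_abs, ← Submodule.coe_norm, hu]
  · have hy' : y = ∑ j, u.repr ⟨y, hy⟩ j • v j := by
      have := congrArg Subtype.val (u.sum_repr ⟨y, hy⟩)
      simp only [Submodule.coe_sum, Submodule.coe_smul] at this
      exact this.symm
    calc |y i| = |∑ j, u.repr ⟨y, hy⟩ j * v j i| := by
          conv_lhs => rw [hy']
          simp
      _ ≤ ∑ j, |u.repr ⟨y, hy⟩ j| * |v j i| := by
          simpa only [abs_mul] using
            Finset.abs_sum_le_sum_abs (fun j => u.repr ⟨y, hy⟩ j * v j i) _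
      _ ≤ ∑ j, ‖y‖ * |v j i| := by
          gcongr with j
          simpa using hrepr ⟨y, hy⟩ j
      _ = (∑ j, |v j i|) * ‖y‖ := by rw [← Finset.mul_sum, mul_comm]

theorem Submodule.exists_weights_rpow_abs_apply_le {p : ℝ} (hp : 1 ≤ p)
    (V : Submodule ℝ (m → ℝ)) :
    ∃ w : m → ℝ, (∀ i, 0 ≤ w i) ∧ ∑ i, w i ≤ (finrank ℝ V : ℝ) ^ p ∧
      ∀ y ∈ V, ∀ i, |y i| ^ p ≤ w i * ∑ j, |y j| ^ p := by
  have hp₀ : 0 < p := by linarith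
  have : Fact (1 ≤ ENNReal.ofReal p) := ⟨by simpa using ENNReal.ofReal_le_ofReal hp⟩
  set e : (m → ℝ) ≃ₗ[ℝ] PiLp (ENNReal.ofReal p) fun _ : m => ℝ :=
    (WithLp.linearEquiv (ENNReal.ofReal p) ℝ (m → ℝ)).symm
  set W := V.map (e : (m → ℝ) →ₗ[ℝ] PiLp (ENNReal.ofReal p) fun _ : m => ℝ)
  have hW : finrank ℝ W = finrank ℝ V := LinearEquiv.finrank_map_eq e V
  obtain ⟨c, hc₀, hc_norm, hc⟩ := PiLp.exists_abs_apply_le_mul_norm W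
  refine ⟨fun i => c i ^ p, fun i => Real.rpow_nonneg (hc₀ i) p, ?_, fun y hy i => ?_⟩
  · calc ∑ i, c i ^ p = ‖WithLp.toLp (ENNReal.ofReal p) c‖ ^ p := by
          simp [PiLp.norm_toLp_rpow hp₀, abs_of_nonneg (hc₀ _)]
      _ ≤ (finrank ℝ V : ℝ) ^ p := by rw [← hW]; gcongr
  · have hyi : |y i| ≤ c i * ‖WithLp.toLp (ENNReal.ofReal p) y‖ :=
      hc (e y) (Submodule.mem_map_of_mem hy) i
    calc |y i| ^ p ≤ (c i * ‖WithLp.toLp (ENNReal.ofReal p) y‖) ^ p := by gcongr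
      _ = c i ^ p * ∑ j, |y j| ^ p := by
          rw [Real.mul_rpow (hc₀ i) (norm_nonneg _), PiLp.norm_toLp_rpow hp₀]

lemma sum_rpow_abs_pos_of_ne_zero {p : ℝ} {y : m → ℝ} (hy : y ≠ 0) :
    0 < ∑ j, |y j| ^ p := by
  obtain ⟨i, hi⟩ := Function.ne_iff.mp hy
  exact (Real.rpow_pos_of_pos (abs_pos.mpr hi) p).trans_le
    (single_le_sum (f := fun j => |y j| ^ p) (fun j _ => by positivity) (mem_univ i))

end LpSubspace

section Rank

variable {m C : Type*} [Fintype C]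

theorem Matrix.rank_add_le {n K : Type*} [Fintype n] [Field K] (A B : Matrix m n K) :
    (A + B).rank ≤ A.rank + B.rank := by
  rw [Matrix.rank, mulVecLin_add]
  exact (Submodule.finrank_mono (LinearMap.range_add_le _ _)).trans
    (Submodule.finrank_add_le_finrank_add_finrank _ _)

theorem rank_submatrix_add_le (K S : Matrix m C ℝ) (G : Finset m) (T : Finset C)
    (hS : ∀ i ∈ G, ∀ j ∉ T, S i j = 0) :
    ((K + S).submatrix ((↑) : G → m) id).rank ≤ K.rank + T.card := by
  classical
  set D : Matrix C C ℝ := diagonal fun j => if j ∈ T then 1 else 0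
  have hrows : (K + S).submatrix ((↑) : G → m) id = (K + S * D).submatrix (↑) id := by
    ext ⟨i, hi⟩ j
    by_cases hj : j ∈ T <;> simp [D, hj, hS i hi j]
  have hD : D.rank = T.card := by simp [D, rank_diagonal]
  calc _ ≤ (K + S * D).rank := hrows ▸ rank_submatrix_le _ _ _
    _ ≤ K.rank + (S * D).rank := rank_add_le _ _
    _ ≤ K.rank + T.card := by grw [rank_mul_le_right, hD]

end Rank

section Sensitivity

variable {m C : Type*} [Fintype m] [Fintype C]

lemma lpSens_le_of_forall {p w : ℝ} {A : Matrix m C ℝ} {i : m} (hw : 0 ≤ w)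
    (h : ∀ x, |(A *ᵥ x) i| ^ p ≤ w * ∑ j, |(A *ᵥ x) j| ^ p) : lpSens p A i ≤ w := by
  refine Real.sSup_le ?_ hw
  rintro _ ⟨x, hx, rfl⟩
  rw [div_le_iff₀ (sum_rpow_abs_pos_of_ne_zero hx)]
  exact h x

lemma lpSens_eq_zero_of_isEmpty [IsEmpty C] (p : ℝ) (A : Matrix m C ℝ) (i : m) :
    lpSens p A i = 0 := by
  have (x : C → ℝ) : A *ᵥ x = 0 := by simp [Subsingleton.elim x 0]
  simp [lpSens, this]

theorem sum_lpSens_le_rank_submatrix_rpow {p : ℝ} (hp : 1 ≤ p) (A : Matrix m C ℝ)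
    (G : Finset m) :
    ∑ i ∈ G, lpSens p A i ≤ ((A.submatrix ((↑) : G → m) id).rank : ℝ) ^ p := by
  obtain ⟨w, hw₀, hw_sum, hw⟩ :=
    Submodule.exists_weights_rpow_abs_apply_le hp
      (LinearMap.range (A.submatrix ((↑) : G → m) id).mulVecLin)
  have hle (i : G) : lpSens p A i ≤ w i := by
    refine lpSens_le_of_forall (hw₀ i) fun x => ?_
    calc |(A *ᵥ x) i| ^ p ≤ w i * ∑ j : G, |(A *ᵥ x) j| ^ p := hw _ ⟨x, rfl⟩ i
      _ ≤ w i * ∑ j, |(A *ᵥ x) j| ^ p := by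
          refine mul_le_mul_of_nonneg_left ?_ (hw₀ i)
          rw [sum_coe_sort G fun j => |(A *ᵥ x) j| ^ p]
          exact sum_le_sum_of_subset_of_nonneg (subset_univ G) fun j _ _ => by positivity
  calc ∑ i ∈ G, lpSens p A i = ∑ i : G, lpSens p A i := (sum_coe_sort G _).symm
    _ ≤ ∑ i, w i := sum_le_sum fun i _ => hle i
    _ ≤ _ := hw_sum

end Sensitivity

/-- **Sensitivity bounds for low rank + sparse matrices**. -/
theorem total_sensitivity_low_rank_plus_sparse
    (n d k s : ℕ) (K S : Matrix (Fin n) (Fin d) ℝ) (p : ℝ) (hp : 1 ≤ p)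
    (hK : K.rank ≤ k)
    (hS : ∀ i, (Finset.univ.filter fun j => S i j ≠ 0).card ≤ s) :
    totalSens p (K + S) ≤ (d : ℝ) ^ s * ((k : ℝ) + s) ^ p := by
  rcases Nat.eq_zero_or_pos d with rfl | hd
  · simp only [totalSens, lpSens_eq_zero_of_isEmpty, sum_const_zero]
    positivity
  have hpad (i : Fin n) : ∃ T, (univ.filter fun j => S i j ≠ 0) ⊆ T ∧ T.card = min s d := by
    obtain ⟨T, hsupp, -, hcard⟩ :=
      exists_subsuperset_card_eq (subset_univ _) (le_min (hS i) (card_le_univ _)) (by simp)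
    exact ⟨T, hsupp, by simpa using hcard⟩
  choose t ht_supp ht_card using hpad
  have hgroup (T : Finset (Fin d)) (hT : T.card = min s d) :
      ∑ i with t i = T, lpSens p (K + S) i ≤ ((k : ℝ) + s) ^ p := by
    have hrank := rank_submatrix_add_le K S {i | t i = T} T fun i hi j hj => by
      by_contra hSij
      rw [mem_filter] at hi
      exact hj (hi.2 ▸ ht_supp i (by simpa using hSij))
    refine (sum_lpSens_le_rank_submatrix_rpow hp _ _).trans ?_
    gcongr
    exact_mod_cast hrank.trans (by omega)
  calc totalSens p (K + S)
      = ∑ T ∈ powersetCard (min s d) univ, ∑ i with t i = T, lpSens p (K + S) i :=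
        (sum_fiberwise_of_maps_to (fun i _ => by simp [ht_card]) _).symm
    _ ≤ ∑ T ∈ powersetCard (min s d) univ, ((k : ℝ) + s) ^ p :=
        sum_le_sum fun T hT => hgroup T (mem_powersetCard.mp hT).2
    _ = (d.choose (min s d) : ℝ) * ((k : ℝ) + s) ^ p := by simp
    _ ≤ (d : ℝ) ^ s * ((k : ℝ) + s) ^ p := by
        gcongr
        exact_mod_cast (Nat.choose_le_pow _ _).trans (Nat.pow_le_pow_right hd (min_le_left _ _))
end

section
/- Let 1 ≤ p < ∞ and let A ∈ ℝ^{n×d} be a rank-d matrix with minimum singular value σ_min > 0. Let E ∈ ℝ^{n×d} be any matrix whose operator norm satisfies ‖E‖_2 ≤ σ_min/(2·n^{1+1/p}). Then 𝔖^p(A+E) ≤ 2^p·(𝔖^p(A) + 1). -/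
/-
Write `a = Ax` and `e = Ex`. The two spectral bounds make every coordinate of `e` at most
`ε ‖a‖_p` with `ε = √n / (2 n^{1+1/p})`, hence `‖e‖_p ≤ β ‖a‖_p` with
`β = n^{1/p} ε = 1/(2√n)`. Then `|(a + e)_i| ≤ (σ_i(A)^{1/p} + ε) ‖a‖_p` and
`‖a + e‖_p ≥ (1 - β) ‖a‖_p`, so `σ_i(A+E) ≤ ((σ_i(A)^{1/p} + ε) / (1 - β))^p`. Summing,
Minkowski's inequality for the vectors `(σ_i(A)^{1/p})_i` and `(ε)_i` gives
`𝔖(A+E) ≤ ((𝔖(A)^{1/p} + β) / (1 - β))^p`, and for `β ≤ 1/3` the base is at most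
`2 max(𝔖(A)^{1/p}, 1)`. When `n ≤ 2` the bound `𝔖(A+E) ≤ n` suffices.
-/

open MeasureTheory Matrix Finset

/-- The Euclidean norm of a finitely supported real vector. -/
noncomputable def l2norm {m : Type*} [Fintype m] (y : m → ℝ) : ℝ :=
  Real.sqrt (∑ i, y i ^ 2)

noncomputable def pNorm {R : Type*} [Fintype R] (p : ℝ) (y : R → ℝ) : ℝ :=
  (∑ j, |y j| ^ p) ^ (1 / p)

section Norms

variable {R : Type*} [Fintype R] {p : ℝ}

theorem pNorm_nonneg (p : ℝ) (y : R → ℝ) : 0 ≤ pNorm p y := by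
  unfold pNorm; positivity

theorem pNorm_rpow (hp : p ≠ 0) (y : R → ℝ) : pNorm p y ^ p = ∑ j, |y j| ^ p := by
  rw [pNorm, ← Real.rpow_mul (by positivity), one_div_mul_cancel hp, Real.rpow_one]

@[simp]
theorem pNorm_neg (p : ℝ) (y : R → ℝ) : pNorm p (-y) = pNorm p y := by
  simp [pNorm]

theorem abs_le_pNorm (hp : 0 < p) (y : R → ℝ) (i : R) : |y i| ≤ pNorm p y := by
  rw [← Real.rpow_le_rpow_iff (abs_nonneg _) (pNorm_nonneg p y) hp, pNorm_rpow hp.ne']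
  exact Finset.single_le_sum (fun j _ => Real.rpow_nonneg (abs_nonneg _) _) (Finset.mem_univ i)

theorem pNorm_pos (hp : 0 < p) {y : R → ℝ} (hy : y ≠ 0) : 0 < pNorm p y := by
  obtain ⟨j, hj⟩ := Function.ne_iff.1 hy
  exact (abs_pos.2 hj).trans_le (abs_le_pNorm hp y j)

theorem pNorm_le_of_abs_le (hp : 0 < p) {y : R → ℝ} {c : ℝ} (hc : 0 ≤ c)
    (h : ∀ j, |y j| ≤ c) : pNorm p y ≤ (Fintype.card R : ℝ) ^ (1 / p) * c :=
  calc pNorm p y ≤ (∑ _j : R, c ^ p) ^ (1 / p) :=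
        Real.rpow_le_rpow (by positivity)
          (Finset.sum_le_sum fun j _ => Real.rpow_le_rpow (abs_nonneg _) (h j) hp.le)
          (by positivity)
    _ = (Fintype.card R : ℝ) ^ (1 / p) * c := by
        rw [Finset.sum_const, Finset.card_univ, nsmul_eq_mul,
          Real.mul_rpow (by positivity) (by positivity), ← Real.rpow_mul hc,
          mul_one_div_cancel hp.ne', Real.rpow_one]

theorem pNorm_add_le (hp : 1 ≤ p) (y z : R → ℝ) : pNorm p (y + z) ≤ pNorm p y + pNorm p z :=
  Real.Lp_add_le Finset.univ y z hp

theorem abs_le_l2norm (y : R → ℝ) (i : R) : |y i| ≤ l2norm y :=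
  Real.abs_le_sqrt (Finset.single_le_sum (fun j _ => sq_nonneg (y j)) (Finset.mem_univ i))

theorem l2norm_le_sqrt_card_mul_pNorm (hp : 0 < p) (y : R → ℝ) :
    l2norm y ≤ √(Fintype.card R : ℝ) * pNorm p y :=
  calc l2norm y ≤ √(∑ _j : R, pNorm p y ^ 2) :=
        Real.sqrt_le_sqrt <| Finset.sum_le_sum fun j _ => by
          rw [← sq_abs]; exact pow_le_pow_left₀ (abs_nonneg _) (abs_le_pNorm hp y j) 2
    _ = √(Fintype.card R : ℝ) * pNorm p y := by
        rw [Finset.sum_const, Finset.card_univ, nsmul_eq_mul, Real.sqrt_mul (by positivity),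
          Real.sqrt_sq (pNorm_nonneg p y)]

end Norms

section Sensitivity

variable {R C : Type*} [Fintype R] [Fintype C] {p : ℝ}

theorem lpSens_nonneg (p : ℝ) (A : Matrix R C ℝ) (i : R) : 0 ≤ lpSens p A i := by
  refine Real.sSup_nonneg ?_
  rintro r ⟨x, -, rfl⟩
  positivity

theorem totalSens_nonneg (p : ℝ) (A : Matrix R C ℝ) : 0 ≤ totalSens p A :=
  Finset.sum_nonneg fun i _ => lpSens_nonneg p A i

theorem lpSens_le_of_abs_le (hp : 0 < p) {A : Matrix R C ℝ} {i : R} {c : ℝ} (hc : 0 ≤ c)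
    (h : ∀ x, |(A *ᵥ x) i| ≤ c * pNorm p (A *ᵥ x)) : lpSens p A i ≤ c ^ p := by
  refine Real.sSup_le ?_ (by positivity)
  rintro r ⟨x, -, rfl⟩
  refine div_le_of_le_mul₀ (by positivity) (by positivity) ?_
  rw [← pNorm_rpow hp.ne', ← Real.mul_rpow hc (pNorm_nonneg _ _)]
  exact Real.rpow_le_rpow (abs_nonneg _) (h x) hp.le

theorem totalSens_le_card (hp : 0 < p) (A : Matrix R C ℝ) :
    totalSens p A ≤ Fintype.card R := by
  have h : ∀ i, lpSens p A i ≤ 1 := fun i => by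
    simpa using lpSens_le_of_abs_le hp zero_le_one fun x => by
      simpa using abs_le_pNorm hp (A *ᵥ x) i
  simpa [totalSens] using Finset.sum_le_sum fun i (_ : i ∈ Finset.univ) => h i

theorem abs_mulVec_le_lpSens (hp : 0 < p) (A : Matrix R C ℝ) (x : C → ℝ) (i : R) :
    |(A *ᵥ x) i| ≤ lpSens p A i ^ (1 / p) * pNorm p (A *ᵥ x) := by
  have hs : 0 ≤ lpSens p A i ^ (1 / p) := Real.rpow_nonneg (lpSens_nonneg p A i) _
  by_cases hx : A *ᵥ x = 0
  · simp only [hx, Pi.zero_apply, abs_zero]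
    exact mul_nonneg hs (pNorm_nonneg _ _)
  have hbdd : BddAbove {r : ℝ | ∃ x : C → ℝ, A *ᵥ x ≠ 0 ∧
      r = |(A *ᵥ x) i| ^ p / ∑ j, |(A *ᵥ x) j| ^ p} := by
    refine ⟨1, ?_⟩
    rintro r ⟨x, -, rfl⟩
    refine div_le_of_le_mul₀ (by positivity) zero_le_one ?_
    rw [one_mul]
    exact Finset.single_le_sum (fun j _ => Real.rpow_nonneg (abs_nonneg _) _) (Finset.mem_univ i)
  have hratio : |(A *ᵥ x) i| ^ p / pNorm p (A *ᵥ x) ^ p ≤ lpSens p A i := by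
    rw [pNorm_rpow hp.ne']
    exact le_csSup hbdd ⟨x, hx, rfl⟩
  rw [div_le_iff₀ (by have := pNorm_pos hp hx; positivity)] at hratio
  rw [← Real.rpow_le_rpow_iff (abs_nonneg _) (mul_nonneg hs (pNorm_nonneg _ _)) hp,
    Real.mul_rpow hs (pNorm_nonneg _ _), ← Real.rpow_mul (lpSens_nonneg p A i),
    one_div_mul_cancel hp.ne', Real.rpow_one]
  exact hratio

end Sensitivity

section Perturbation

variable {R C : Type*} [Fintype R] [Fintype C] {p ε : ℝ} {A E : Matrix R C ℝ}

theorem lpSens_add_le (hp : 1 ≤ p) (hε : 0 ≤ ε)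
    (hE : ∀ x j, |(E *ᵥ x) j| ≤ ε * pNorm p (A *ᵥ x))
    (hβ : (Fintype.card R : ℝ) ^ (1 / p) * ε < 1) (i : R) :
    lpSens p (A + E) i ≤
      ((lpSens p A i ^ (1 / p) + ε) / (1 - (Fintype.card R : ℝ) ^ (1 / p) * ε)) ^ p := by
  have hp0 : 0 < p := by linarith
  set β := (Fintype.card R : ℝ) ^ (1 / p) * ε
  have hs : 0 ≤ lpSens p A i ^ (1 / p) := Real.rpow_nonneg (lpSens_nonneg p A i) _
  refine lpSens_le_of_abs_le hp0 (div_nonneg (by positivity) (by linarith)) fun x => ?_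
  set a := A *ᵥ x
  set e := E *ᵥ x
  have he : pNorm p e ≤ β * pNorm p a := by
    rw [mul_assoc]
    exact pNorm_le_of_abs_le hp0 (mul_nonneg hε (pNorm_nonneg p a)) (hE x)
  have hlower : (1 - β) * pNorm p a ≤ pNorm p (a + e) := by
    have h := pNorm_add_le hp (a + e) (-e)
    rw [add_neg_cancel_right, pNorm_neg] at h
    linarith
  rw [Matrix.add_mulVec, Pi.add_apply]
  calc |a i + e i| ≤ |a i| + |e i| := abs_add_le _ _
    _ ≤ lpSens p A i ^ (1 / p) * pNorm p a + ε * pNorm p a :=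
        add_le_add (abs_mulVec_le_lpSens hp0 A x i) (hE x i)
    _ = (lpSens p A i ^ (1 / p) + ε) / (1 - β) * ((1 - β) * pNorm p a) := by
        field_simp [(by linarith : 1 - β ≠ 0)]
    _ ≤ (lpSens p A i ^ (1 / p) + ε) / (1 - β) * pNorm p (a + e) :=
        mul_le_mul_of_nonneg_left hlower (div_nonneg (by positivity) (by linarith))

theorem totalSens_add_le (hp : 1 ≤ p) (hε : 0 ≤ ε)
    (hE : ∀ x j, |(E *ᵥ x) j| ≤ ε * pNorm p (A *ᵥ x))
    (hβ : (Fintype.card R : ℝ) ^ (1 / p) * ε < 1) :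
    totalSens p (A + E) ≤ ((totalSens p A ^ (1 / p) + (Fintype.card R : ℝ) ^ (1 / p) * ε) /
      (1 - (Fintype.card R : ℝ) ^ (1 / p) * ε)) ^ p := by
  have hp0 : 0 < p := by linarith
  set β := (Fintype.card R : ℝ) ^ (1 / p) * ε
  set s : R → ℝ := fun i => lpSens p A i ^ (1 / p)
  have hs : ∀ i, 0 ≤ s i := fun i => Real.rpow_nonneg (lpSens_nonneg p A i) _
  have hpNorm_s : pNorm p s = totalSens p A ^ (1 / p) := by
    simp only [pNorm, totalSens, s]
    congr 1
    refine Finset.sum_congr rfl fun i _ => ?_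
    rw [abs_of_nonneg (hs i), ← Real.rpow_mul (lpSens_nonneg p A i), one_div_mul_cancel hp0.ne',
      Real.rpow_one]
  have hMinkowski : pNorm p (s + fun _ => ε) ≤ totalSens p A ^ (1 / p) + β :=
    hpNorm_s ▸ (pNorm_add_le hp _ _).trans
      (add_le_add_right (pNorm_le_of_abs_le hp0 hε fun _ => (abs_of_nonneg hε).le) _)
  calc totalSens p (A + E) ≤ ∑ i, ((s i + ε) / (1 - β)) ^ p :=
        Finset.sum_le_sum fun i _ => lpSens_add_le hp hε hE hβ i
    _ = pNorm p (s + fun _ => ε) ^ p / (1 - β) ^ p := by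
        rw [pNorm_rpow hp0.ne', Finset.sum_div]
        refine Finset.sum_congr rfl fun i _ => ?_
        rw [Pi.add_apply, abs_of_nonneg (add_nonneg (hs i) hε),
          Real.div_rpow (add_nonneg (hs i) hε) (by linarith)]
    _ ≤ (totalSens p A ^ (1 / p) + β) ^ p / (1 - β) ^ p := by
        gcongr
        exact pNorm_nonneg p _
    _ = ((totalSens p A ^ (1 / p) + β) / (1 - β)) ^ p :=
        (Real.div_rpow (add_nonneg (Real.rpow_nonneg (totalSens_nonneg p A) _)
          (by positivity)) (by linarith) p).symm

end Perturbation

theorem rpow_add_div_one_sub_le {S p β : ℝ} (hS : 0 ≤ S) (hp : 0 < p) (hβ0 : 0 ≤ β)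
    (hβ : β ≤ 1 / 3) : ((S ^ (1 / p) + β) / (1 - β)) ^ p ≤ 2 ^ p * (S + 1) := by
  set U := S ^ (1 / p)
  have hU0 : 0 ≤ U := Real.rpow_nonneg hS _
  have hUp : U ^ p = S := by
    rw [← Real.rpow_mul hS, one_div_mul_cancel hp.ne', Real.rpow_one]
  have hbase : (U + β) / (1 - β) ≤ 2 * max U 1 := by
    rw [div_le_iff₀ (by linarith)]
    nlinarith [le_max_left U 1, le_max_right U 1]
  have hmax : max U 1 ^ p ≤ S + 1 := by
    rcases le_total U 1 with h | h
    · rw [max_eq_right h, Real.one_rpow]; linarith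
    · rw [max_eq_left h, hUp]; linarith
  calc ((U + β) / (1 - β)) ^ p ≤ (2 * max U 1) ^ p :=
        Real.rpow_le_rpow (div_nonneg (by positivity) (by linarith)) hbase hp.le
    _ = 2 ^ p * max U 1 ^ p := Real.mul_rpow zero_le_two (by positivity)
    _ ≤ 2 ^ p * (S + 1) := by gcongr

theorem rpow_one_div_mul_sqrt_div_le_one_third {n : ℝ} (hn : 3 ≤ n) (p : ℝ) :
    n ^ (1 / p) * (√n / (2 * n ^ (1 + 1 / p))) ≤ 1 / 3 := by
  have hn0 : 0 < n := by linarith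
  have hsqrt : 3 / 2 ≤ √n := Real.le_sqrt_of_sq_le (by linarith)
  have hsqrt_le : 3 * √n ≤ 2 * n := by nlinarith [Real.mul_self_sqrt hn0.le]
  have hpow : 0 < n ^ (1 / p) := Real.rpow_pos_of_pos hn0 _
  rw [Real.rpow_add hn0, Real.rpow_one, mul_div_assoc',
    div_le_div_iff₀ (by positivity) (by norm_num)]
  nlinarith [mul_le_mul_of_nonneg_left hsqrt_le hpow.le]

theorem total_sensitivity_perturbation_general
    (n d : ℕ) (A E : Matrix (Fin n) (Fin d) ℝ) (p σmin : ℝ)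
    (hp : 1 ≤ p)
    (hmin : ∀ x : Fin d → ℝ, σmin * l2norm x ≤ l2norm (A.mulVec x))
    (hE : ∀ x : Fin d → ℝ,
      l2norm (E.mulVec x) ≤ σmin / (2 * (n : ℝ) ^ ((1 : ℝ) + 1 / p)) * l2norm x) :
    totalSens p (A + E) ≤ 2 ^ p * (totalSens p A + 1) := by
  have hp0 : 0 < p := by linarith
  rcases lt_or_ge n 3 with hn | hn
  · calc totalSens p (A + E) ≤ n := by simpa using totalSens_le_card hp0 (A + E)
      _ ≤ 2 ^ (1 : ℝ) := by rw [Real.rpow_one]; exact_mod_cast Nat.le_of_lt_succ hn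
      _ ≤ 2 ^ p := Real.rpow_le_rpow_of_exponent_le one_le_two hp
      _ ≤ 2 ^ p * (totalSens p A + 1) :=
          le_mul_of_one_le_right (by positivity) (by linarith [totalSens_nonneg p A])
  · have hn3 : (3 : ℝ) ≤ n := by exact_mod_cast hn
    set K := 2 * (n : ℝ) ^ ((1 : ℝ) + 1 / p)
    have hcoord : ∀ x j, |(E *ᵥ x) j| ≤ √n / K * pNorm p (A *ᵥ x) := fun x j =>
      calc |(E *ᵥ x) j| ≤ σmin / K * l2norm x := (abs_le_l2norm _ j).trans (hE x)
        _ ≤ l2norm (A *ᵥ x) / K := by rw [div_mul_eq_mul_div]; gcongr; exact hmin x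
        _ ≤ √n * pNorm p (A *ᵥ x) / K := by
            gcongr; simpa using l2norm_le_sqrt_card_mul_pNorm hp0 (A *ᵥ x)
        _ = √n / K * pNorm p (A *ᵥ x) := by ring
    have hβ : (Fintype.card (Fin n) : ℝ) ^ (1 / p) * (√n / K) ≤ 1 / 3 := by
      rw [Fintype.card_fin]; exact rpow_one_div_mul_sqrt_div_le_one_third hn3 p
    exact (totalSens_add_le hp (by positivity) hcoord (by linarith)).trans
      (rpow_add_div_one_sub_le (totalSens_nonneg p A) hp0 (by positivity) hβ)

/-- **Total ℓ_p sensitivity is robust under small perturbations**: if `A` has full column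
rank with minimum singular value at least `σmin > 0`, and the operator norm of `E` is at
most `σmin / (2 n^{1+1/p})`, then `𝔖^p(A+E) ≤ 2^p (𝔖^p(A) + 1)`. -/
theorem total_sensitivity_perturbation
    (n d : ℕ) (A E : Matrix (Fin n) (Fin d) ℝ) (p σmin : ℝ)
    (hp : 1 ≤ p) (hrank : A.rank = d) (hσ : 0 < σmin)
    (hmin : ∀ x : Fin d → ℝ, σmin * l2norm x ≤ l2norm (A.mulVec x))
    (hE : ∀ x : Fin d → ℝ,
      l2norm (E.mulVec x) ≤ σmin / (2 * (n : ℝ) ^ ((1 : ℝ) + 1 / p)) * l2norm x) :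
    totalSens p (A + E) ≤ 2 ^ p * (totalSens p A + 1) :=
  total_sensitivity_perturbation_general n d A E p σmin hp hmin hE
end

section
/- Let 1 ≤ p < ∞, let A ∈ ℝ^{n×d}, and let 0 < α < 1. Set k = ⌈1/α⌉ (so k ≤ 2/α). Then the matrix A' ∈ ℝ^{nk×d} obtained by replacing each row a_i of A with k copies of a_i/k^{1/p} satisfies: (i) σ_j^q(A') ≤ α for every row index j ∈ [nk] and every 1 ≤ q < ∞; and (ii) for every 1 ≤ q < ∞ and every x ∈ ℝ^d, ‖A'x‖_q = k^{1/q − 1/p}·‖Ax‖_q. -/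
open MeasureTheory Matrix Finset

/-- The entrywise ℓ_p norm of a vector. -/
noncomputable def lpNorm (p : ℝ) {m : Type*} [Fintype m] (y : m → ℝ) : ℝ :=
  (∑ i, |y i| ^ p) ^ (1 / p)

section RowReplication

variable {R ι C : Type*} [Fintype R] [Fintype ι] [Fintype C]

theorem lpNorm_smul {q : ℝ} (hq : q ≠ 0) (c : ℝ) (y : R → ℝ) :
    lpNorm q (c • y) = |c| * lpNorm q y := by
  have hsum : ∑ i, |(c • y) i| ^ q = |c| ^ q * ∑ i, |y i| ^ q := by
    simp only [Pi.smul_apply, smul_eq_mul, abs_mul,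
      Real.mul_rpow (abs_nonneg c) (abs_nonneg _), Finset.mul_sum]
  unfold _root_.lpNorm
  rw [hsum, Real.mul_rpow (by positivity) (by positivity), ← Real.rpow_mul (abs_nonneg c),
    mul_one_div_cancel hq, Real.rpow_one]

theorem lpNorm_comp_fst (q : ℝ) (y : R → ℝ) :
    lpNorm q (fun j : R × ι => y j.1) = (Fintype.card ι : ℝ) ^ (1 / q) * lpNorm q y := by
  have hsum : ∑ j : R × ι, |y j.1| ^ q = Fintype.card ι * ∑ i, |y i| ^ q := by
    simp only [Fintype.sum_prod_type, Finset.sum_const, Finset.card_univ, nsmul_eq_mul,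
      Finset.mul_sum]
  unfold _root_.lpNorm
  rw [hsum, Real.mul_rpow (by positivity) (by positivity)]

/-- The `|ι|` copies of row `j` alone contribute `|ι| · |(Bx)_j|^q` to `‖Bx‖_q^q`. -/
theorem lpSens_le_inv_card_of_rows_eq (q : ℝ) (B : Matrix (R × ι) C ℝ)
    (hB : ∀ i c c', B (i, c) = B (i, c')) (j : R × ι) :
    lpSens q B j ≤ (Fintype.card ι : ℝ)⁻¹ := by
  have hcard : (0 : ℝ) < Fintype.card ι := by
    have : Nonempty ι := ⟨j.2⟩
    exact_mod_cast Fintype.card_pos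
  refine Real.sSup_le ?_ (by positivity)
  rintro r ⟨x, -, rfl⟩
  set y := B *ᵥ x
  have hy : ∀ c, y (j.1, c) = y j := fun c => by
    simp only [y, mulVec, hB j.1 c j.2]
  have hcopies : Fintype.card ι * |y j| ^ q ≤ ∑ j', |y j'| ^ q :=
    calc Fintype.card ι * |y j| ^ q = ∑ c : ι, |y (j.1, c)| ^ q := by
          simp only [hy, Finset.sum_const, Finset.card_univ, nsmul_eq_mul]
      _ ≤ ∑ i, ∑ c : ι, |y (i, c)| ^ q :=
          Finset.single_le_sum (f := fun i => ∑ c : ι, |y (i, c)| ^ q)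
            (fun _ _ => by positivity) (Finset.mem_univ j.1)
      _ = ∑ j', |y j'| ^ q := (Fintype.sum_prod_type fun j' => |y j'| ^ q).symm
  exact div_le_of_le_mul₀ (by positivity) (by positivity) ((le_inv_mul_iff₀ hcard).mpr hcopies)

end RowReplication

theorem flatten_all_sensitivities_general
    (n d : ℕ) (A : Matrix (Fin n) (Fin d) ℝ) (p α : ℝ)
    (hα0 : 0 < α) :
    ∀ k : ℕ, k = ⌈1 / α⌉₊ →
      ∀ A' : Matrix (Fin n × Fin k) (Fin d) ℝ,
        (∀ i : Fin n, ∀ c : Fin k, ∀ l : Fin d, A' (i, c) l = A i l / (k : ℝ) ^ (1 / p)) →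
        (∀ j : Fin n × Fin k, ∀ q : ℝ, 1 ≤ q → lpSens q A' j ≤ α) ∧
        (∀ q : ℝ, 1 ≤ q → ∀ x : Fin d → ℝ,
          lpNorm q (A'.mulVec x) = (k : ℝ) ^ (1 / q - 1 / p) * lpNorm q (A.mulVec x)) := by
  intro k hk A' hA'
  have hk_ge : α⁻¹ ≤ k := by simpa [hk] using Nat.le_ceil (1 / α)
  have hk_pos : (0 : ℝ) < k := lt_of_lt_of_le (by positivity) hk_ge
  have hmulVec :
      ∀ x, A' *ᵥ x = fun j : Fin n × Fin k => (((k : ℝ) ^ (1 / p))⁻¹ • (A *ᵥ x)) j.1 := by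
    intro x
    ext ⟨i, c⟩
    simp only [mulVec, dotProduct, hA', Pi.smul_apply, smul_eq_mul, Finset.mul_sum, div_eq_inv_mul,
      mul_assoc]
  refine ⟨fun j q _ => ?_, fun q hq x => ?_⟩
  · calc lpSens q A' j ≤ (Fintype.card (Fin k) : ℝ)⁻¹ :=
          lpSens_le_inv_card_of_rows_eq q A' (fun i c c' => funext fun l => by rw [hA', hA']) j
      _ ≤ α := by rw [Fintype.card_fin]; exact inv_le_of_inv_le₀ hα0 hk_ge
  · rw [hmulVec, lpNorm_comp_fst, lpNorm_smul (by linarith), Fintype.card_fin, abs_inv,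
      abs_of_pos (by positivity), ← Real.rpow_neg hk_pos.le, sub_eq_add_neg,
      Real.rpow_add hk_pos, mul_assoc]

/-- **Flattening all sensitivities**: replacing each row `a_i` of `A` by `k = ⌈1/α⌉`
copies of `a_i / k^{1/p}` makes every `ℓ_q` sensitivity at most `α` and scales every
`ℓ_q` norm by exactly `k^{1/q − 1/p}`. -/
theorem flatten_all_sensitivities
    (n d : ℕ) (A : Matrix (Fin n) (Fin d) ℝ) (p α : ℝ)
    (hp : 1 ≤ p) (hα0 : 0 < α) (hα1 : α < 1) :
    ∀ k : ℕ, k = ⌈1 / α⌉₊ →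
      ∀ A' : Matrix (Fin n × Fin k) (Fin d) ℝ,
        (∀ i : Fin n, ∀ c : Fin k, ∀ l : Fin d, A' (i, c) l = A i l / (k : ℝ) ^ (1 / p)) →
        (∀ j : Fin n × Fin k, ∀ q : ℝ, 1 ≤ q → lpSens q A' j ≤ α) ∧
        (∀ q : ℝ, 1 ≤ q → ∀ x : Fin d → ℝ,
          lpNorm q (A'.mulVec x) = (k : ℝ) ^ (1 / q - 1 / p) * lpNorm q (A.mulVec x)) :=
  flatten_all_sensitivities_general n d A p α hα0
end
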